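/- Let R = ℤ[X,Y]/(Y² − X³ − 5X − 10), let p be the maximal ideal of R generated by the images of 2, X and Y, and let O be the localization of R at p. Then the length of the O-module O/(Y − 16, Y + 16)·O equals 5. (This is the local intersection number m₂₄ = i_{x₂₄}(S₂, S₄) of the Zariski closures of S₂ = (6,−16) and S₄ = (6,16) at their intersection point x₂₄ above the prime 2.) -/

import Mathlib

open MvPolynomial

/-- The affine coordinate ring `R = ℤ[X,Y]/(Y² − X³ − 5X − 10)` of the elliptic
curve `E : y² = x³ + 5x + 10` over `ℤ`, with `ℤ[X,Y]` realized as
`MvPolynomial (Fin 2) ℤ`, `X = X 0` and `Y = X 1`. -/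
noncomputable abbrev R : Type :=
  MvPolynomial (Fin 2) ℤ ⧸
    Ideal.span {(X 1 : MvPolynomial (Fin 2) ℤ) ^ 2 - (X 0) ^ 3 - 5 * X 0 - 10}

/-- The image of `X` in `R`. -/
noncomputable def x : R := Ideal.Quotient.mk _ (X 0)

/-- The image of `Y` in `R`. -/
noncomputable def y : R := Ideal.Quotient.mk _ (X 1)

/-- The ideal of `R` generated by the images of `2`, `X` and `Y`, corresponding to
the intersection point `x₂₄` of the closures of `S₂ = (6,−16)` and `S₄ = (6,16)`
above the prime `2`. -/
noncomputable def p : Ideal R := Ideal.span {(2 : R), x, y}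

/-! The integral point `S₄ = (6, 16)` gives an evaluation `R → ℤ`. Reduced mod `2` its kernel is
`p`, so `p` is maximal; reduced mod `32` it extends to `O = R_p` (elements outside `p` go to odd
integers) and kills `J = (y - 16, y + 16)`, so `O ⧸ J` has characteristic `32`. Conversely
`32 = (y + 16) - (y - 16) ∈ J`, and `(x - 6)(x + 3)² = (y - 16)(y + 16) + 32(6 - x)` with `x + 3`
a unit of `O` gives `x - 6 ∈ J`; hence `ℤ → O ⧸ J` is onto. So `O ⧸ J ≅ ℤ/2⁵`, of length `5`. -/

theorem CharP.of_ringHom_zmod {S : Type*} [Ring S] (n : ℕ) (f : S →+* ZMod n)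
    (hn : (n : S) = 0) : CharP S n :=
  ⟨fun m => ⟨fun hm => (ZMod.natCast_eq_zero_iff m n).1 (by simpa using congrArg f hm),
    fun ⟨k, hk⟩ => by rw [hk, Nat.cast_mul, hn, zero_mul]⟩⟩

theorem Ring.ord_int_prime_pow {q : ℤ} (hq : Prime q) (k : ℕ) : Ring.ord ℤ (q ^ k) = k := by
  rw [Ring.ord_pow (mem_nonZeroDivisors_of_ne_zero hq.ne_zero),
    Ring.ord_of_irreducible hq.irreducible, nsmul_one]

theorem Module.length_eq_of_surjective_of_smul_eq {S T M : Type*} [Ring S] [Ring T]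
    [AddCommGroup M] [Module S M] [Module T M] (σ : S →+* T) (hσ : Function.Surjective σ)
    (hsmul : ∀ (s : S) (m : M), s • m = σ s • m) :
    Module.length S M = Module.length T M := by
  have : RingHomSurjective σ := ⟨hσ⟩
  let f : M →ₛₗ[σ] M := ⟨AddHom.id M, hsmul⟩
  rw [Module.length, Module.length, WithBot.unbot_inj,
    Order.krullDim_eq_of_orderIso (Submodule.orderIsoMapComapOfBijective f Function.bijective_id)]

theorem Module.length_int_eq_ord_of_intCast_surjective {Q : Type*} [Ring Q] (n : ℕ) [CharP Q n]
    (hQ : Function.Surjective (Int.cast : ℤ → Q)) :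
    Module.length ℤ Q = Ring.ord ℤ (n : ℤ) := by
  have e : (ℤ ⧸ Ideal.span {(n : ℤ)}) ≃+* Q :=
    (Ideal.quotEquivOfEq (CharP.ker_intAlgebraMap_eq_span n).symm).trans
      (RingHom.quotientKerEquivOfSurjective (f := algebraMap ℤ Q) hQ)
  exact (e.toAddEquiv.toIntLinearEquiv.length_eq).symm

namespace Curve400H1

theorem y_sq : y ^ 2 = x ^ 3 + 5 * x + 10 := by
  have h := Ideal.Quotient.eq_zero_iff_mem.2 (Ideal.mem_span_singleton_self
    ((X 1 : MvPolynomial (Fin 2) ℤ) ^ 2 - (X 0) ^ 3 - 5 * X 0 - 10))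
  simp only [map_sub, map_mul, map_pow, map_ofNat] at h
  rw [x, y]
  linear_combination h

theorem ringHom_ext {T : Type*} [Ring T] {f g : R →+* T} (hx : f x = g x) (hy : f y = g y) :
    f = g := by
  refine Ideal.Quotient.ringHom_ext (MvPolynomial.ringHom_ext (fun a => ?_) fun i => ?_)
  · rw [eq_intCast C a, map_intCast, map_intCast]
  · fin_cases i
    exacts [hx, hy]

noncomputable def evalS₄ : R →+* ℤ :=
  Ideal.Quotient.lift _ (MvPolynomial.eval ![6, 16]) fun a ha => by
    obtain ⟨c, rfl⟩ := Ideal.mem_span_singleton'.1 ha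
    simp

@[simp] theorem evalS₄_x : evalS₄ x = 6 := by simp [evalS₄, x]

@[simp] theorem evalS₄_y : evalS₄ y = 16 := by simp [evalS₄, y]

theorem mk_p_eq_zero_of_mem {r : R} (hr : r ∈ ({2, x, y} : Set R)) :
    Ideal.Quotient.mk p r = 0 :=
  Ideal.Quotient.eq_zero_iff_mem.2 (Ideal.subset_span hr)

theorem two_eq_zero_mod_p : (2 : R ⧸ p) = 0 := by
  rw [← map_ofNat (Ideal.Quotient.mk p) 2]
  exact mk_p_eq_zero_of_mem (by simp)

theorem mk_p_eq_intCast_comp_evalS₄ :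
    Ideal.Quotient.mk p = (Int.castRingHom (R ⧸ p)).comp evalS₄ := by
  refine ringHom_ext ?_ ?_
  · rw [mk_p_eq_zero_of_mem (by simp), RingHom.comp_apply, evalS₄_x, eq_intCast, Int.cast_ofNat]
    linear_combination (-3 : R ⧸ p) * two_eq_zero_mod_p
  · rw [mk_p_eq_zero_of_mem (by simp), RingHom.comp_apply, evalS₄_y, eq_intCast, Int.cast_ofNat]
    linear_combination (-8 : R ⧸ p) * two_eq_zero_mod_p

theorem p_eq_ker : p = RingHom.ker ((Int.castRingHom (ZMod 2)).comp evalS₄) := by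
  refine le_antisymm (Ideal.span_le.2 ?_) fun r hr => ?_
  · rintro r (rfl | rfl | rfl) <;> simp [map_ofNat evalS₄ 2] <;> decide
  · obtain ⟨k, hk⟩ := (ZMod.intCast_zmod_eq_zero_iff_dvd _ 2).1 hr
    rw [← Ideal.Quotient.eq_zero_iff_mem, mk_p_eq_intCast_comp_evalS₄, RingHom.comp_apply, hk,
      map_mul, map_natCast, Nat.cast_ofNat]
    linear_combination (Int.castRingHom (R ⧸ p) k) * two_eq_zero_mod_p

instance p_isMaximal : p.IsMaximal := by
  rw [p_eq_ker]
  refine RingHom.ker_isMaximal_of_surjective _ fun t => ?_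
  obtain ⟨n, rfl⟩ := ZMod.intCast_surjective t
  exact ⟨n, by simp⟩

local notation "O" => Localization.AtPrime p

-- `Ring.toSemiring` is the instance path of the ideal in `local_intersection_number_eq_five`;
-- under the default `Semiring` instance of a localization, `O ⧸ J` and `sub_mem` are not found.
noncomputable def J : @Ideal O Ring.toSemiring :=
  Ideal.span {algebraMap R O (y - 16), algebraMap R O (y + 16)}

theorem algebraMap_y_sub_mem_J : algebraMap R O (y - 16) ∈ J :=
  Ideal.subset_span (by simp)

theorem algebraMap_y_add_mem_J : algebraMap R O (y + 16) ∈ J :=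
  Ideal.subset_span (by simp)

theorem isUnit_evalS₄_of_notMem {s : R} (hs : s ∉ p) : IsUnit ((evalS₄ s : ℤ) : ZMod 32) := by
  rw [p_eq_ker, RingHom.mem_ker, RingHom.comp_apply, eq_intCast,
    ZMod.intCast_zmod_eq_zero_iff_dvd] at hs
  have := (Int.prime_two.coprime_iff_not_dvd.2 hs).pow_left (m := 5)
  exact (ZMod.coe_int_isUnit_iff_isCoprime _ 32).2 (by simpa using this)

noncomputable def toZMod32 : O →+* ZMod 32 :=
  IsLocalization.lift (M := p.primeCompl) (g := (Int.castRingHom (ZMod 32)).comp evalS₄)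
    fun s => isUnit_evalS₄_of_notMem s.2

theorem toZMod32_algebraMap (r : R) : toZMod32 (algebraMap R O r) = evalS₄ r :=
  IsLocalization.lift_eq _ _

theorem J_le_ker : J ≤ RingHom.ker toZMod32 := by
  rw [J, Ideal.span_le]
  rintro _ (rfl | rfl) <;> simp [toZMod32_algebraMap, map_ofNat evalS₄]
  decide

theorem thirtyTwo_mem_J : (32 : O) ∈ J := by
  have : (32 : O) = algebraMap R O (y + 16) - algebraMap R O (y - 16) := by
    simp only [map_add, map_sub, map_ofNat]
    ring
  rw [this]
  exact sub_mem algebraMap_y_add_mem_J algebraMap_y_sub_mem_J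

instance charP_quotient_J : CharP (O ⧸ J) 32 :=
  CharP.of_ringHom_zmod 32 (Ideal.Quotient.lift J toZMod32 J_le_ker)
    (by exact_mod_cast Ideal.Quotient.eq_zero_iff_mem.2 thirtyTwo_mem_J)

theorem x_sub_six_mul_eq : (x - 6) * (x + 3) ^ 2 = (y - 16) * (y + 16) + 32 * (6 - x) := by
  linear_combination (-1 : R) * y_sq

theorem algebraMap_x_sub_six_mem_J : algebraMap R O (x - 6) ∈ J := by
  have hx3 : (x + 3) ^ 2 ∉ p := by
    rw [p_eq_ker]
    simp [map_ofNat evalS₄]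
    decide
  have hmem : algebraMap R O ((x - 6) * (x + 3) ^ 2) ∈ J := by
    rw [x_sub_six_mul_eq, map_add, map_mul, map_mul, map_ofNat]
    exact add_mem (Ideal.mul_mem_right _ _ algebraMap_y_sub_mem_J)
      (Ideal.mul_mem_right _ _ thirtyTwo_mem_J)
  rw [map_mul] at hmem
  exact (Ideal.mul_unit_mem_iff_mem J (IsLocalization.map_units O (⟨_, hx3⟩ : p.primeCompl))).1
    hmem

theorem mk_J_algebraMap_eq_of_sub_mem {r : R} {n : ℤ} (h : algebraMap R O (r - n) ∈ J) :
    Ideal.Quotient.mk J (algebraMap R O r) = n := by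
  have := (Ideal.Quotient.mk_eq_mk_iff_sub_mem (I := J) (algebraMap R O r) (algebraMap R O n)).2
    (by rwa [map_sub] at h)
  rwa [map_intCast, map_intCast] at this

theorem mk_J_comp_algebraMap_eq_intCast_comp_evalS₄ :
    (Ideal.Quotient.mk J).comp (algebraMap R O) = (Int.castRingHom (O ⧸ J)).comp evalS₄ := by
  refine ringHom_ext ?_ ?_
  · rw [RingHom.comp_apply, RingHom.comp_apply, evalS₄_x, eq_intCast]
    exact mk_J_algebraMap_eq_of_sub_mem (by simpa using algebraMap_x_sub_six_mem_J)
  · rw [RingHom.comp_apply, RingHom.comp_apply, evalS₄_y, eq_intCast]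
    exact mk_J_algebraMap_eq_of_sub_mem (by simpa using algebraMap_y_sub_mem_J)

theorem intCast_surjective_quotient_J : Function.Surjective (Int.cast : ℤ → O ⧸ J) := by
  have h : Ideal.Quotient.mk J = (ZMod.castHom (dvd_refl 32) (O ⧸ J)).comp toZMod32 := by
    refine IsLocalization.ringHom_ext p.primeCompl (RingHom.ext fun r => ?_)
    rw [mk_J_comp_algebraMap_eq_intCast_comp_evalS₄]
    simp [toZMod32_algebraMap]
  intro q
  obtain ⟨w, rfl⟩ := Ideal.Quotient.mk_surjective q
  obtain ⟨n, hn⟩ := ZMod.intCast_surjective (toZMod32 w)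
  exact ⟨n, by rw [h, RingHom.comp_apply, ← hn, map_intCast]⟩

theorem length_quotient_J : Module.length O (O ⧸ J) = 5 := by
  rw [Module.length_eq_of_surjective_of_smul_eq (Ideal.Quotient.mk J)
      Ideal.Quotient.mk_surjective fun _ m => by
        induction m using Submodule.Quotient.induction_on; rfl,
    ← Module.length_eq_of_surjective_of_smul_eq (Int.castRingHom (O ⧸ J))
      intCast_surjective_quotient_J fun k m => zsmul_eq_mul m k,
    Module.length_int_eq_ord_of_intCast_surjective 32 intCast_surjective_quotient_J,
    show ((32 : ℕ) : ℤ) = 2 ^ 5 by norm_num, Ring.ord_int_prime_pow Int.prime_two]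
  rfl

end Curve400H1

/-- The ideal `p = (2, X, Y)` of `R` is maximal and, with `O` the localization of
`R` at `p`, the length of the `O`-module `O/(Y − 16, Y + 16)O` equals `5`:  here the
length is expressed as the Krull dimension of the lattice of `O`-submodules.  This
is the local intersection number `m₂₄ = i_{x₂₄}(S₂, S₄)`. -/
theorem local_intersection_number_eq_five :
    ∃ hp : p.IsMaximal,
      Order.krullDim
        (Submodule (@Localization.AtPrime R _ p hp.isPrime)
          ((@Localization.AtPrime R _ p hp.isPrime) ⧸
            (Ideal.span {algebraMap R _ (y - 16), algebraMap R _ (y + 16)} :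
              @Ideal (@Localization.AtPrime R _ p hp.isPrime) Ring.toSemiring))) = 5 := by
  refine ⟨Curve400H1.p_isMaximal, ?_⟩
  rw [← Module.coe_length]
  exact congrArg _ Curve400H1.length_quotient_J
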